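/- arXiv:0903.4226 — 6 statements merged into one kernel-verified Lean document; each statement's English description precedes it below -/
import Mathlib

section
/- Let a_n^{(k)} denote the n-th Mahler coefficient of the k-fold iterate S^k of the p-adic shift. Then a_{p^k}^{(k)} = 1. -/
variable {p : ℕ} [hp : Fact p.Prime]

lemma padicShift_exists (x : ℤ_[p]) :
    ∃ y : ℤ_[p], x = ((PadicInt.toZMod x).val : ℤ_[p]) + p * y := by
  have h := PadicInt.toZMod_spec x
  rw [PadicInt.maximalIdeal_eq_span_p, Ideal.mem_span_singleton] at h
  obtain ⟨y, hy⟩ := h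
  refine ⟨y, ?_⟩
  rw [← ZMod.natCast_val] at hy
  linear_combination hy

/-- The `p`-adic shift, deleting the first digit of the `p`-adic expansion. -/
noncomputable def padicShift (x : ℤ_[p]) : ℤ_[p] :=
  Classical.choose (padicShift_exists x)

/-- The `n`-th Mahler coefficient of the `k`-fold iterate of the `p`-adic shift. -/
noncomputable def mahlerCoeffShift (k n : ℕ) : ℤ_[p] :=
  ∑ i ∈ Finset.range (n + 1),
    (-1 : ℤ_[p]) ^ (n + i) * padicShift^[k] ((i : ℤ_[p])) * (n.choose i : ℤ_[p])

lemma padicShift_spec (x : ℤ_[p]) :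
    x = ((PadicInt.toZMod x).val : ℤ_[p]) + p * padicShift x :=
  Classical.choose_spec (padicShift_exists x)

lemma padicShift_natCast (n : ℕ) :
    padicShift (p := p) (n : ℤ_[p]) = ((n / p : ℕ) : ℤ_[p]) := by
  have hshift := padicShift_spec (p := p) n
  rw [map_natCast, ZMod.val_natCast] at hshift
  have hdiv : (n : ℤ_[p]) = ((n % p : ℕ) : ℤ_[p]) + p * ((n / p : ℕ) : ℤ_[p]) := by
    exact_mod_cast congrArg (Nat.cast : ℕ → ℤ_[p]) (Nat.mod_add_div n p).symm
  apply mul_left_cancel₀ (Nat.cast_ne_zero.mpr hp.out.ne_zero : (p : ℤ_[p]) ≠ 0)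
  linear_combination hdiv - hshift

lemma padicShift_iterate_natCast (k n : ℕ) :
    padicShift^[k] (n : ℤ_[p]) = ((n / p ^ k : ℕ) : ℤ_[p]) := by
  induction k generalizing n with
  | zero => simp
  | succ k ih =>
    rw [Function.iterate_succ_apply, padicShift_natCast, ih,
      Nat.div_div_eq_div_mul, pow_succ, mul_comm]

lemma padicShift_iterate_natCast_of_lt {k n : ℕ} (hn : n < p ^ k) :
    padicShift^[k] (n : ℤ_[p]) = 0 := by
  rw [padicShift_iterate_natCast, Nat.div_eq_of_lt hn, Nat.cast_zero]

lemma padicShift_iterate_pow (k : ℕ) : padicShift^[k] ((p ^ k : ℕ) : ℤ_[p]) = 1 := by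
  rw [padicShift_iterate_natCast, Nat.div_self (pow_pos hp.out.pos k), Nat.cast_one]

/-- `a_{p^k}^{(k)} = 1`. -/
theorem mahlerCoeffShift_pow_eq_one (k : ℕ) :
    mahlerCoeffShift (p := p) k (p ^ k) = 1 := by
  -- only the top index `i = p ^ k` survives: below it, `S^k i = ⌊i / p ^ k⌋ = 0`
  have hlower : ∀ i ∈ Finset.range (p ^ k), (-1 : ℤ_[p]) ^ (p ^ k + i) *
      padicShift^[k] (i : ℤ_[p]) * ((p ^ k).choose i : ℤ_[p]) = 0 := fun i hi => by
    rw [padicShift_iterate_natCast_of_lt (Finset.mem_range.mp hi), mul_zero, zero_mul]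
  rw [mahlerCoeffShift, Finset.sum_range_succ, Finset.sum_eq_zero hlower, padicShift_iterate_pow,
    Nat.choose_self, ← two_mul, pow_mul]
  norm_num
end

section
/- Let T: Z_p → Z_p be (r, C) locally scaling. Then for any r' ≤ r and any x ∈ Z_p, the restriction of T to the closed ball B(x, r') is a bijection onto the closed ball B(T(x), C·r'). -/
/-!
Since `T` multiplies distances by `p^m` on the ball, it is injective there and maps it into the
target ball. For surjectivity, the image of the compact ball is compact, so it contains a point
`T y` nearest to a given `z` of the target. If `T y ≠ z` and `‖z - T y‖ = p^(-s)`, then `T` maps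
the `p` points `y + i p^(m+s)` to `p` points of the ball `B(T y, p^(-s))` at mutual distance
`p^(-s)`; these meet each of its `p` sub-balls of radius `p^(-s-1)`, in particular the one
containing `z`, contradicting minimality.
-/

open Metric Set

theorem IsCompact.mem_of_forall_exists_dist_lt {X : Type*} [MetricSpace X] {K : Set X}
    (hK : IsCompact K) (hne : K.Nonempty) {z : X}
    (h : ∀ w ∈ K, w ≠ z → ∃ w' ∈ K, dist z w' < dist z w) : z ∈ K := by
  obtain ⟨w, hw, hmin⟩ := hK.exists_infDist_eq_dist hne z
  by_contra hz
  obtain ⟨w', hw', hlt⟩ := h w hw (ne_of_mem_of_not_mem hw hz)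
  exact (infDist_le_dist_of_mem hw').not_gt (hmin ▸ hlt)

theorem IsUltrametricDist.dist_le_of_mem_closedBall {X : Type*} [PseudoMetricSpace X]
    [IsUltrametricDist X] {c u v : X} {r : ℝ} (hu : u ∈ closedBall c r) (hv : v ∈ closedBall c r) :
    dist v u ≤ r := by
  rw [IsUltrametricDist.closedBall_eq_of_mem hu] at hv
  exact hv

namespace PadicInt

variable {p : ℕ} [Fact p.Prime]

theorem one_lt_prime : (1 : ℝ) < p := mod_cast (Fact.out : p.Prime).one_lt

theorem prime_pos : (0 : ℝ) < p := zero_lt_one.trans one_lt_prime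

theorem norm_lt_one_iff_toZMod_eq_zero (u : ℤ_[p]) : ‖u‖ < 1 ↔ toZMod u = 0 := by
  rw [norm_lt_one_iff_dvd, ← Ideal.mem_span_singleton, ← maximalIdeal_eq_span_p, ← ker_toZMod,
    RingHom.mem_ker]

theorem norm_natCast_val_sub_natCast_val {i j : ZMod p} (hij : i ≠ j) :
    ‖(i.val : ℤ_[p]) - j.val‖ = 1 := by
  refine le_antisymm (norm_le_one _) (not_lt.mp fun h => hij ?_)
  rwa [norm_lt_one_iff_toZMod_eq_zero, map_sub, map_natCast, map_natCast, ZMod.natCast_zmod_val,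
    ZMod.natCast_zmod_val, sub_eq_zero] at h

theorem exists_norm_sub_lt_one {u : ZMod p → ℤ_[p]}
    (hu : Pairwise fun i j => ‖u i - u j‖ = 1) (w : ℤ_[p]) : ∃ i, ‖w - u i‖ < 1 := by
  have hinj : Function.Injective (toZMod ∘ u) := fun i j hij => by
    by_contra hne
    have := (norm_lt_one_iff_toZMod_eq_zero (u i - u j)).mpr (by simpa [sub_eq_zero] using hij)
    exact this.ne (hu hne)
  obtain ⟨i, hi⟩ := Finite.injective_iff_surjective.mp hinj (toZMod w)
  exact ⟨i, (norm_lt_one_iff_toZMod_eq_zero _).mpr (by simpa [sub_eq_zero] using hi.symm)⟩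

theorem pow_dvd_of_norm_le {u : ℤ_[p]} {n : ℕ} (h : ‖u‖ ≤ (p : ℝ) ^ (-(n : ℤ))) :
    (p : ℤ_[p]) ^ n ∣ u :=
  Ideal.mem_span_singleton.mp ((norm_le_pow_iff_mem_span_pow u n).mp h)

theorem norm_p_pow_mul (n : ℕ) (u : ℤ_[p]) :
    ‖(p : ℤ_[p]) ^ n * u‖ = (p : ℝ) ^ (-(n : ℤ)) * ‖u‖ := by
  rw [norm_mul, norm_p_pow]

theorem pairwise_norm_p_pow_mul_val_sub (t : ℕ) :
    Pairwise fun i j : ZMod p =>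
      ‖(p : ℤ_[p]) ^ t * i.val - (p : ℤ_[p]) ^ t * j.val‖ = (p : ℝ) ^ (-(t : ℤ)) :=
  fun _ _ hij => by
    beta_reduce
    rw [← mul_sub, norm_p_pow_mul, norm_natCast_val_sub_natCast_val hij, mul_one]

theorem exists_norm_sub_lt_pow {n : ℕ} {c : ℤ_[p]} {w : ZMod p → ℤ_[p]}
    (hw : ∀ i, ‖w i - c‖ ≤ (p : ℝ) ^ (-(n : ℤ)))
    (hpair : Pairwise fun i j => ‖w i - w j‖ = (p : ℝ) ^ (-(n : ℤ)))
    {z : ℤ_[p]} (hz : ‖z - c‖ ≤ (p : ℝ) ^ (-(n : ℤ))) :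
    ∃ i, ‖z - w i‖ < (p : ℝ) ^ (-(n : ℤ)) := by
  have hpos : (0 : ℝ) < (p : ℝ) ^ (-(n : ℤ)) := zpow_pos prime_pos _
  choose v hv using fun i => pow_dvd_of_norm_le (hw i)
  obtain ⟨v₀, hv₀⟩ := pow_dvd_of_norm_le hz
  have hsub : ∀ u i, (p : ℤ_[p]) ^ n * u + c - w i = (p : ℤ_[p]) ^ n * (u - v i) := fun u i => by
    rw [← sub_add_cancel (w i) c, hv i]; ring
  have hv_pair : Pairwise fun i j => ‖v i - v j‖ = 1 := fun i j hij => by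
    have : ‖w i - w j‖ = _ := hpair hij
    rwa [← sub_add_cancel (w i) c, hv i, hsub, norm_p_pow_mul, mul_eq_left₀ hpos.ne'] at this
  obtain ⟨i, hi⟩ := exists_norm_sub_lt_one hv_pair v₀
  refine ⟨i, ?_⟩
  rw [← sub_add_cancel z c, hv₀, hsub, norm_p_pow_mul]
  exact mul_lt_of_lt_one_right hpos hi

/-- The paper's `(r, C)` locally scaling, with `r = p^{-a}` and `C = p^m`. -/
def LocallyScaling (T : ℤ_[p] → ℤ_[p]) (a m : ℕ) : Prop :=
  ∀ x y : ℤ_[p], ‖x - y‖ ≤ (p : ℝ) ^ (-(a : ℤ)) → ‖T x - T y‖ = (p : ℝ) ^ m * ‖x - y‖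

namespace LocallyScaling

variable {T : ℤ_[p] → ℤ_[p]} {a m b : ℕ}

theorem norm_sub_eq (hT : LocallyScaling T a m) (hab : a ≤ b) {u v : ℤ_[p]}
    (h : ‖u - v‖ ≤ (p : ℝ) ^ (-(b : ℤ))) : ‖T u - T v‖ = (p : ℝ) ^ m * ‖u - v‖ :=
  hT u v (h.trans (zpow_le_zpow_right₀ one_lt_prime.le (by omega)))

theorem continuous (hT : LocallyScaling T a m) : Continuous T := by
  refine continuous_iff_continuousAt.mpr fun x => ContinuousOn.continuousAt ?_
    (closedBall_mem_nhds x (zpow_pos (prime_pos (p := p)) (-(a : ℤ))))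
  refine (LipschitzOnWith.of_dist_le_mul (K := ⟨(p : ℝ) ^ m, by positivity⟩)
    fun u hu v hv => ?_).continuousOn
  rw [dist_eq_norm, dist_eq_norm, hT u v (IsUltrametricDist.dist_le_of_mem_closedBall hv hu)]
  exact le_rfl

theorem mapsTo_closedBall (hT : LocallyScaling T a m) (hab : a ≤ b) (x : ℤ_[p]) :
    MapsTo T (closedBall x ((p : ℝ) ^ (-(b : ℤ))))
      (closedBall (T x) ((p : ℝ) ^ m * (p : ℝ) ^ (-(b : ℤ)))) := fun y hy => by
  rw [mem_closedBall, dist_eq_norm] at hy ⊢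
  rw [hT.norm_sub_eq hab hy]
  gcongr

theorem injOn_closedBall (hT : LocallyScaling T a m) (hab : a ≤ b) (x : ℤ_[p]) :
    InjOn T (closedBall x ((p : ℝ) ^ (-(b : ℤ)))) := fun u hu v hv huv => by
  have h := hT.norm_sub_eq hab (IsUltrametricDist.dist_le_of_mem_closedBall hv hu)
  rw [huv, sub_self, norm_zero, eq_comm, mul_eq_zero_iff_left (pow_ne_zero m prime_pos.ne'),
    norm_eq_zero, sub_eq_zero] at h
  exact h

theorem exists_dist_lt (hT : LocallyScaling T a m) (hab : a ≤ b) {x y z : ℤ_[p]}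
    (hy : y ∈ closedBall x ((p : ℝ) ^ (-(b : ℤ))))
    (hz : z ∈ closedBall (T x) ((p : ℝ) ^ m * (p : ℝ) ^ (-(b : ℤ)))) (hne : T y ≠ z) :
    ∃ y' ∈ closedBall x ((p : ℝ) ^ (-(b : ℤ))), dist z (T y') < dist z (T y) := by
  set s := (z - T y).valuation
  have hnorm : ‖z - T y‖ = (p : ℝ) ^ (-(s : ℤ)) :=
    norm_eq_zpow_neg_valuation (sub_ne_zero.mpr hne.symm)
  have hbs : b ≤ m + s := by
    have h := IsUltrametricDist.dist_le_of_mem_closedBall (hT.mapsTo_closedBall hab x hy) hz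
    rw [dist_eq_norm, hnorm, ← zpow_natCast, ← zpow_add₀ prime_pos.ne'] at h
    have := (zpow_le_zpow_iff_right₀ one_lt_prime).mp h
    omega
  have hscale : (p : ℝ) ^ m * (p : ℝ) ^ (-((m + s : ℕ) : ℤ)) = (p : ℝ) ^ (-(s : ℤ)) := by
    rw [← zpow_natCast, ← zpow_add₀ prime_pos.ne']
    congr 1
    push_cast
    ring
  set yi : ZMod p → ℤ_[p] := fun i => y + (p : ℤ_[p]) ^ (m + s) * i.val
  have hyi : ∀ i, ‖yi i - y‖ ≤ (p : ℝ) ^ (-((m + s : ℕ) : ℤ)) := fun i => by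
    rw [add_sub_cancel_left, norm_p_pow_mul]
    exact mul_le_of_le_one_right (zpow_pos prime_pos _).le (norm_le_one _)
  have hyi_pair : Pairwise fun i j => ‖yi i - yi j‖ = (p : ℝ) ^ (-((m + s : ℕ) : ℤ)) :=
    fun _ _ hij => by
      beta_reduce
      rw [add_sub_add_left_eq_sub]
      exact pairwise_norm_p_pow_mul_val_sub _ hij
  have hab' : a ≤ m + s := hab.trans hbs
  obtain ⟨i, hi⟩ := exists_norm_sub_lt_pow (n := s) (c := T y) (w := T ∘ yi)
    (fun i => by
      rw [Function.comp_apply, hT.norm_sub_eq hab' (hyi i), ← hscale]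
      gcongr
      exact hyi i)
    (fun i j hij => by
      beta_reduce
      rw [Function.comp_apply, Function.comp_apply, hT.norm_sub_eq hab' (hyi_pair hij).le,
        hyi_pair hij, hscale])
    hnorm.le
  refine ⟨yi i, ?_, ?_⟩
  · refine (dist_triangle_max _ y _).trans (max_le ?_ hy)
    rw [dist_eq_norm]
    exact (hyi i).trans (zpow_le_zpow_right₀ one_lt_prime.le (by omega))
  · rwa [dist_eq_norm, dist_eq_norm, hnorm]

theorem surjOn_closedBall (hT : LocallyScaling T a m) (hab : a ≤ b) (x : ℤ_[p]) :
    SurjOn T (closedBall x ((p : ℝ) ^ (-(b : ℤ))))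
      (closedBall (T x) ((p : ℝ) ^ m * (p : ℝ) ^ (-(b : ℤ)))) := fun z hz => by
  refine ((isCompact_closedBall x _).image hT.continuous).mem_of_forall_exists_dist_lt
    ⟨T x, mem_image_of_mem T (mem_closedBall_self (zpow_pos prime_pos _).le)⟩ ?_
  rintro _ ⟨y, hy, rfl⟩ hne
  obtain ⟨y', hy', hlt⟩ := hT.exists_dist_lt hab hy hz hne
  exact ⟨T y', mem_image_of_mem T hy', hlt⟩

end LocallyScaling

end PadicInt

/-- a `(p^{-a}, p^m)` locally scaling map restricts to a bijection from any
closed ball of radius `p^{-b} ≤ p^{-a}` onto the closed ball of radius `p^m · p^{-b}`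
around the image of its center. -/
theorem locallyScaling_bijOn_closedBall {p : ℕ} [hp : Fact p.Prime]
    (a m b : ℕ) (hba : a ≤ b) (T : ℤ_[p] → ℤ_[p])
    (hT : ∀ x y : ℤ_[p], ‖x - y‖ ≤ (p : ℝ) ^ (-(a : ℤ)) →
      ‖T x - T y‖ = (p : ℝ) ^ (m : ℕ) * ‖x - y‖)
    (x : ℤ_[p]) :
    Set.BijOn T (Metric.closedBall x ((p : ℝ) ^ (-(b : ℤ))))
      (Metric.closedBall (T x) ((p : ℝ) ^ (m : ℕ) * (p : ℝ) ^ (-(b : ℤ)))) := by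
  have hT : PadicInt.LocallyScaling T a m := hT
  exact ⟨hT.mapsTo_closedBall hba x, hT.injOn_closedBall hba x, hT.surjOn_closedBall hba x⟩
end

section
/- Let T: Z_p → Z_p be (p^{-k}, p^k) locally scaling and B a closed ball of radius p^{-kj} (j ≥ 1). Then T^{-1}(B) is a disjoint union of exactly p^k closed balls of radius p^{-k(j+1)}, each lying in a distinct closed ball of radius p^{-kj}. -/
/-!
On each residue class `a + p^k ℤ_p` the map `t ↦ T (a + p^k t)` is an isometry of the compact
space `ℤ_p`, hence onto; so each of the `p^k` balls of radius `p^{-k}` contains a preimage `c_a`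
of `y`. On that ball `T` multiplies distances to `c_a` by exactly `p^k`, so it meets
`T⁻¹ (closedBall y p^{-kj})` in `closedBall c_a p^{-k(j+1)}`. Points of distinct residue classes
are more than `p^{-k} ≥ p^{-kj}` apart.
-/

open Metric Set

theorem Isometry.iterate {X : Type*} [PseudoEMetricSpace X] {f : X → X} (hf : Isometry f) :
    ∀ n, Isometry f^[n]
  | 0 => isometry_id
  | n + 1 => (hf.iterate n).comp hf

theorem Isometry.surjective_of_compactSpace {X : Type*} [MetricSpace X] [CompactSpace X]
    {f : X → X} (hf : Isometry f) : Function.Surjective f := by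
  intro x
  -- The orbit of `x` has a Cauchy subsequence, so `x` is arbitrarily close to some `f^[d] x`
  -- with `d ≥ 1`.
  suffices x ∈ closure (range f) by
    rwa [hf.isClosedEmbedding.isClosed_range.closure_eq] at this
  refine Metric.mem_closure_iff.2 fun ε hε => ?_
  obtain ⟨a, -, φ, hφ, hlim⟩ :=
    isCompact_univ.tendsto_subseq (x := fun n => f^[n] x) fun _ => mem_univ _
  obtain ⟨N, hN⟩ := Metric.cauchySeq_iff'.1 hlim.cauchySeq ε hε
  have hlt : φ N < φ (N + 1) := hφ N.lt_succ_self
  refine ⟨f^[φ (N + 1) - φ N] x, ⟨f^[φ (N + 1) - φ N - 1] x, ?_⟩, ?_⟩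
  · rw [← Function.iterate_succ_apply' f]
    congr 1
    omega
  · rw [← (hf.iterate (φ N)).dist_eq, ← Function.iterate_add_apply,
      Nat.add_sub_cancel' hlt.le, dist_comm]
    exact hN (N + 1) N.le_succ

theorem IsUltrametricDist.lt_dist_of_lt_dist {X : Type*} [PseudoMetricSpace X]
    [IsUltrametricDist X] {a a' b b' : X} {r : ℝ} (ha : a' ∈ closedBall a r)
    (hb : b' ∈ closedBall b r) (hab : r < dist a b) : r < dist a' b' := by
  refine lt_of_not_ge fun h => hab.not_ge ?_
  refine (dist_triangle_max _ a' _).trans (max_le (dist_comm a' a ▸ ha) ?_)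
  exact (dist_triangle_max _ b' _).trans (max_le h hb)

namespace PadicInt

variable {p : ℕ} [Fact p.Prime]

def IsLocallyScaling (k : ℕ) (T : ℤ_[p] → ℤ_[p]) : Prop :=
  ∀ x y : ℤ_[p], ‖x - y‖ ≤ (p : ℝ) ^ (-(k : ℤ)) →
    ‖T x - T y‖ = (p : ℝ) ^ k * ‖x - y‖

theorem norm_pow_mul_le (n : ℕ) (t : ℤ_[p]) :
    ‖(p : ℤ_[p]) ^ n * t‖ ≤ (p : ℝ) ^ (-(n : ℤ)) := by
  rw [norm_mul, norm_p_pow]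
  exact mul_le_of_le_one_right (by positivity) t.norm_le_one

theorem exists_dist_natCast_le (x : ℤ_[p]) (n : ℕ) :
    ∃ i : Fin (p ^ n), dist x (i : ℕ) ≤ (p : ℝ) ^ (-(n : ℤ)) :=
  ⟨⟨x.appr n, x.appr_lt n⟩, (norm_le_pow_iff_mem_span_pow _ n).2 (x.appr_spec n)⟩

theorem pow_neg_lt_dist_natCast {n i i' : ℕ} (hi : i < p ^ n) (hi' : i' < p ^ n)
    (hne : i ≠ i') : (p : ℝ) ^ (-(n : ℤ)) < dist (i : ℤ_[p]) i' := by
  by_contra! h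
  rw [dist_eq_norm, show (i : ℤ_[p]) - i' = ((i - i' : ℤ) : ℤ_[p]) by push_cast; ring,
    norm_int_le_pow_iff_dvd] at h
  have hi : (i : ℤ) < (p : ℤ) ^ n := by exact_mod_cast hi
  have hi' : (i' : ℤ) < (p : ℤ) ^ n := by exact_mod_cast hi'
  have : (i : ℤ) - i' = 0 := Int.eq_zero_of_abs_lt_dvd h (by rw [abs_lt]; omega)
  omega

namespace IsLocallyScaling

variable {k : ℕ} {T : ℤ_[p] → ℤ_[p]}

theorem isometry_comp_affine (hT : IsLocallyScaling k T) (a : ℤ_[p]) :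
    Isometry fun t => T (a + (p : ℤ_[p]) ^ k * t) := by
  refine Isometry.of_dist_eq fun t s => ?_
  have hsub : a + (p : ℤ_[p]) ^ k * t - (a + (p : ℤ_[p]) ^ k * s) =
      (p : ℤ_[p]) ^ k * (t - s) := by
    ring
  rw [dist_eq_norm, dist_eq_norm, hT _ _ (hsub ▸ norm_pow_mul_le k _), hsub, norm_mul,
    norm_p_pow, ← mul_assoc, ← zpow_natCast,
    ← zpow_add₀ (Nat.cast_ne_zero.2 (Fact.out : p.Prime).ne_zero), add_neg_cancel, zpow_zero,
    one_mul]

theorem exists_mem_closedBall_apply_eq (hT : IsLocallyScaling k T) (a y : ℤ_[p]) :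
    ∃ z ∈ closedBall a ((p : ℝ) ^ (-(k : ℤ))), T z = y := by
  obtain ⟨t, ht⟩ := (hT.isometry_comp_affine a).surjective_of_compactSpace y
  refine ⟨a + (p : ℤ_[p]) ^ k * t, ?_, ht⟩
  rw [mem_closedBall, dist_eq_norm, add_sub_cancel_left]
  exact norm_pow_mul_le k t

theorem apply_mem_closedBall_iff (hT : IsLocallyScaling k T) {x z : ℤ_[p]}
    (hxz : dist x z ≤ (p : ℝ) ^ (-(k : ℤ))) (r : ℝ) :
    T x ∈ closedBall (T z) ((p : ℝ) ^ k * r) ↔ x ∈ closedBall z r := by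
  rw [mem_closedBall, mem_closedBall, dist_eq_norm, dist_eq_norm, hT x z hxz]
  exact mul_le_mul_iff_right₀ (pow_pos (by exact_mod_cast (Fact.out : p.Prime).pos) k)

theorem preimage_closedBall_eq_iUnion (hT : IsLocallyScaling k T) {ι : Type*} {y : ℤ_[p]}
    {c : ι → ℤ_[p]} (hc : ∀ i, T (c i) = y)
    (hcover : ∀ x, ∃ i, dist x (c i) ≤ (p : ℝ) ^ (-(k : ℤ))) {r : ℝ}
    (hr : r ≤ (p : ℝ) ^ (-(k : ℤ))) :
    T ⁻¹' closedBall y ((p : ℝ) ^ k * r) = ⋃ i, closedBall (c i) r := by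
  ext x
  rw [mem_preimage, mem_iUnion]
  constructor
  · intro hx
    obtain ⟨i, hi⟩ := hcover x
    exact ⟨i, (hT.apply_mem_closedBall_iff hi r).1 (hc i ▸ hx)⟩
  · rintro ⟨i, hi⟩
    exact hc i ▸ (hT.apply_mem_closedBall_iff (hi.trans hr) r).2 hi

end IsLocallyScaling

end PadicInt

open PadicInt in
theorem locallyScaling_preimage_ball_general {p : ℕ} [hp : Fact p.Prime]
    (k j : ℕ) (hj : 1 ≤ j) (T : ℤ_[p] → ℤ_[p])
    (hT : ∀ x y : ℤ_[p], ‖x - y‖ ≤ (p : ℝ) ^ (-(k : ℤ)) →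
      ‖T x - T y‖ = (p : ℝ) ^ (k : ℕ) * ‖x - y‖)
    (y : ℤ_[p]) :
    ∃ c : Fin (p ^ k) → ℤ_[p],
      (T ⁻¹' Metric.closedBall y ((p : ℝ) ^ (-(k * j : ℤ))) =
        ⋃ i, Metric.closedBall (c i) ((p : ℝ) ^ (-(k * (j + 1) : ℤ)))) ∧
      ∀ i i' : Fin (p ^ k), i ≠ i' → (p : ℝ) ^ (-(k * j : ℤ)) < ‖c i - c i'‖ := by
  have hT : IsLocallyScaling k T := hT
  have hp1 : (1 : ℝ) ≤ p := by exact_mod_cast hp.out.one_lt.le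
  have hscale :
      (p : ℝ) ^ k * (p : ℝ) ^ (-(k * (j + 1) : ℤ)) = (p : ℝ) ^ (-(k * j : ℤ)) := by
    rw [← zpow_natCast, ← zpow_add₀ (zero_lt_one.trans_le hp1).ne']
    ring_nf
  have hsmall : (p : ℝ) ^ (-(k * (j + 1) : ℤ)) ≤ (p : ℝ) ^ (-(k : ℤ)) :=
    zpow_le_zpow_right₀ hp1 (by nlinarith)
  have hbig : (p : ℝ) ^ (-(k * j : ℤ)) ≤ (p : ℝ) ^ (-(k : ℤ)) :=
    zpow_le_zpow_right₀ hp1 (by nlinarith [(by exact_mod_cast hj : (1 : ℤ) ≤ j)])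
  choose c hc hTc using fun i : Fin (p ^ k) => hT.exists_mem_closedBall_apply_eq (i : ℕ) y
  refine ⟨c, ?_, fun i i' hne => ?_⟩
  · rw [← hscale]
    refine hT.preimage_closedBall_eq_iUnion hTc (fun x => ?_) hsmall
    obtain ⟨i, hi⟩ := exists_dist_natCast_le x k
    exact ⟨i, (dist_triangle_max _ _ _).trans (max_le hi (dist_comm (c i) _ ▸ hc i))⟩
  · rw [← dist_eq_norm]
    exact hbig.trans_lt <| IsUltrametricDist.lt_dist_of_lt_dist (hc i) (hc i')
      (pow_neg_lt_dist_natCast i.2 i'.2 (Fin.val_ne_of_ne hne))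

/-- for `T` `(p^{-k}, p^k)` locally scaling, the preimage of a closed ball
of radius `p^{-kj}` is a disjoint union of exactly `p^k` closed balls of radius
`p^{-k(j+1)}`, lying in pairwise distinct closed balls of radius `p^{-kj}`. -/
theorem locallyScaling_preimage_ball {p : ℕ} [hp : Fact p.Prime]
    (k j : ℕ) (hk : 1 ≤ k) (hj : 1 ≤ j) (T : ℤ_[p] → ℤ_[p])
    (hT : ∀ x y : ℤ_[p], ‖x - y‖ ≤ (p : ℝ) ^ (-(k : ℤ)) →
      ‖T x - T y‖ = (p : ℝ) ^ (k : ℕ) * ‖x - y‖)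
    (y : ℤ_[p]) :
    ∃ c : Fin (p ^ k) → ℤ_[p],
      (T ⁻¹' Metric.closedBall y ((p : ℝ) ^ (-(k * j : ℤ))) =
        ⋃ i, Metric.closedBall (c i) ((p : ℝ) ^ (-(k * (j + 1) : ℤ)))) ∧
      ∀ i i' : Fin (p ^ k), i ≠ i' → (p : ℝ) ^ (-(k * j : ℤ)) < ‖c i - c i'‖ :=
  locallyScaling_preimage_ball_general (hp := hp) k j hj T hT y
end

section
/- For every n ≥ 1, the map Z_p → Z_p given by x ↦ binom(x, n) is p^{⌊log_p n⌋}-Lipschitz: |binom(x,n) - binom(y,n)| ≤ p^{⌊log_p n⌋} · |x - y| for all x, y ∈ Z_p. -/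
/-!
Write `x = y + h`. By Chu–Vandermonde, `binom(x, n) - binom(y, n)` is a sum of terms
`binom(y, i) * binom(h, k)` with `1 ≤ k ≤ n`, and by the ultrametric inequality it suffices
to bound each `‖binom(h, k)‖`. The identity `k * binom(h, k) = h * binom(h - 1, k - 1)` gives
`‖k‖ * ‖binom(h, k)‖ ≤ ‖h‖`, and `‖k‖ ≥ p ^ (-⌊log_p n⌋)` because `v_p(k) ≤ log_p k ≤ log_p n`.
-/

open Finset

namespace Ring

theorem choose_add_sub_choose {R : Type*} [CommRing R] [BinomialRing R] (y h : R) (n : ℕ) :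
    choose (y + h) n - choose y n =
      ∑ ij ∈ (antidiagonal n).erase (n, 0), choose y ij.1 * choose h ij.2 := by
  have hmem : (n, 0) ∈ antidiagonal n := mem_antidiagonal.mpr (add_zero n)
  rw [add_choose_eq n (Commute.all y h), ← add_sum_erase _ _ hmem, choose_zero_right, mul_one,
    add_sub_cancel_left]

end Ring

namespace PadicInt

variable {p : ℕ} [hp : Fact p.Prime]

theorem norm_natCast_eq_zpow_neg_padicValNat {k : ℕ} (hk : k ≠ 0) :
    ‖(k : ℤ_[p])‖ = (p : ℝ) ^ (-(padicValNat p k : ℤ)) := by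
  rw [norm_def, coe_natCast, Padic.norm_eq_zpow_neg_valuation (Nat.cast_ne_zero.mpr hk),
    Padic.valuation_natCast]

theorem inv_pow_log_le_norm_natCast {k n : ℕ} (hk : k ≠ 0) (hkn : k ≤ n) :
    ((p : ℝ) ^ Nat.log p n)⁻¹ ≤ ‖(k : ℤ_[p])‖ := by
  rw [norm_natCast_eq_zpow_neg_padicValNat hk, zpow_neg, zpow_natCast]
  have hp1 : (1 : ℝ) ≤ p := by exact_mod_cast hp.out.one_lt.le
  gcongr
  exact (padicValNat_le_nat_log k).trans (Nat.log_mono_right hkn)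

theorem norm_natCast_mul_norm_choose_le (z : ℤ_[p]) {k : ℕ} (hk : k ≠ 0) :
    ‖(k : ℤ_[p])‖ * ‖Ring.choose z k‖ ≤ ‖z‖ := by
  have h := Ring.choose_smul_choose z (n := k) (k := 1) (Nat.one_le_iff_ne_zero.mpr hk)
  rw [Nat.choose_one_right, Ring.choose_one_right, nsmul_eq_mul, Nat.cast_one] at h
  rw [← norm_mul, h, norm_mul]
  exact mul_le_of_le_one_right (norm_nonneg z) (norm_le_one _)

theorem norm_choose_le (z : ℤ_[p]) {k n : ℕ} (hk : k ≠ 0) (hkn : k ≤ n) :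
    ‖Ring.choose z k‖ ≤ (p : ℝ) ^ Nat.log p n * ‖z‖ := by
  have hq : (0 : ℝ) < (p : ℝ) ^ Nat.log p n := pow_pos (Nat.cast_pos.mpr hp.out.pos) _
  calc ‖Ring.choose z k‖
      = (p : ℝ) ^ Nat.log p n * (((p : ℝ) ^ Nat.log p n)⁻¹ * ‖Ring.choose z k‖) := by
        rw [mul_inv_cancel_left₀ hq.ne']
    _ ≤ (p : ℝ) ^ Nat.log p n * (‖(k : ℤ_[p])‖ * ‖Ring.choose z k‖) := by
        gcongr
        exact inv_pow_log_le_norm_natCast hk hkn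
    _ ≤ (p : ℝ) ^ Nat.log p n * ‖z‖ := by
        gcongr
        exact norm_natCast_mul_norm_choose_le z hk

end PadicInt

theorem choose_lipschitz_general {p : ℕ} [hp : Fact p.Prime] (n : ℕ) (x y : ℤ_[p]) :
    ‖(Ring.choose x n : ℤ_[p]) - Ring.choose y n‖ ≤ (p : ℝ) ^ (Nat.log p n) * ‖x - y‖ := by
  rw [← add_sub_cancel y x, Ring.choose_add_sub_choose, add_sub_cancel_left]
  refine IsUltrametricDist.norm_sum_le_of_forall_le_of_nonneg (by positivity) fun ij hij => ?_
  obtain ⟨hne, hmem⟩ := mem_erase.mp hij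
  have hsum : ij.1 + ij.2 = n := mem_antidiagonal.mp hmem
  have hk : ij.2 ≠ 0 := fun h0 => hne (Prod.ext (by omega) h0)
  calc ‖Ring.choose y ij.1 * Ring.choose (x - y) ij.2‖
      ≤ ‖Ring.choose (x - y) ij.2‖ := by
        rw [norm_mul]
        exact mul_le_of_le_one_left (norm_nonneg _) (PadicInt.norm_le_one _)
    _ ≤ (p : ℝ) ^ Nat.log p n * ‖x - y‖ := PadicInt.norm_choose_le _ hk (by omega)

/-- `x ↦ binom(x, n)` is `p^{⌊log_p n⌋}`-Lipschitz on `ℤ_p`. -/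
theorem choose_lipschitz {p : ℕ} [hp : Fact p.Prime] (n : ℕ) (hn : 1 ≤ n) (x y : ℤ_[p]) :
    ‖(Ring.choose x n : ℤ_[p]) - Ring.choose y n‖ ≤ (p : ℝ) ^ (Nat.log p n) * ‖x - y‖ :=
  choose_lipschitz_general (hp := hp) n x y
end

section
/- Let T(x) = Σ_{n≥0} A_n binom(x,n) be a uniformly convergent Mahler series on Z_p, and set C = max_n p^{⌊log_p n⌋}|A_n|. Suppose the maximum is attained at a unique n_0, that n_0 = p^k with k > 0, and that |A_{n_0}| = 1 (so C = p^k). Then T is (p^{-k}, p^k) locally scaling. -/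
/-!
Write `h = x - y`. Vandermonde gives `C(x,n) - C(y,n) = ∑_{0<i≤n} C(h,i) C(y,n-i)`, and the
identity `n C(h,n) = h C(h-1,n-1)` with `|n| ≥ p^{-⌊log_p n⌋}` bounds `|C(h,i)| ≤ p^{⌊log_p i⌋}|h|`;
hence `|C(x,n) - C(y,n)| ≤ p^{⌊log_p n⌋}|h|`. For `n = p^k` and `|h| ≤ p^{-k}`, the same identity,
in which `C(h-1,p^k-1)` is a unit because it lies within `p^{k-1}|h| < 1` of `C(-1,p^k-1) = ±1`, gives
`|C(h,p^k)| = p^k|h|`, while every other Vandermonde term is at most `p^{k-1}|h|`.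
As norms lie in `p^ℤ`, strict maximality of `p^{⌊log_p n⌋}|A_n|` at `p^k` upgrades to
`p^{⌊log_p n⌋}|A_n| ≤ p^{k-1}` for `n ≠ p^k`, so in the Mahler expansion of `T x - T y` the term
`n = p^k` strictly dominates all others and the ultrametric inequality gives its norm.
-/

open Finset

namespace IsUltrametricDist

variable {G ι : Type*} [NormedAddCommGroup G] [IsUltrametricDist G]

lemma norm_add_eq_left_of_norm_lt {a b : G} (h : ‖b‖ < ‖a‖) : ‖a + b‖ = ‖a‖ := by
  rw [norm_add_eq_max_of_norm_ne_norm h.ne', max_eq_left h.le]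

lemma norm_tsum_eq_of_forall_ne_le_of_lt {f : ι → G} {i : ι} {c : ℝ} (hf : Summable f)
    (hc : 0 ≤ c) (hle : ∀ j ≠ i, ‖f j‖ ≤ c) (hlt : c < ‖f i‖) : ‖∑' j, f j‖ = ‖f i‖ := by
  classical
  have hrest : ‖∑' j, if j = i then 0 else f j‖ ≤ c := by
    refine norm_tsum_le_of_forall_le_of_nonneg hc fun j => ?_
    split_ifs with hj
    · simpa using hc
    · exact hle j hj
  rw [hf.tsum_eq_add_tsum_ite i, norm_add_eq_left_of_norm_lt (hrest.trans_lt hlt)]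

lemma norm_sum_eq_of_forall_ne_le_of_lt {s : Finset ι} {f : ι → G} {i : ι} {c : ℝ} (hi : i ∈ s)
    (hc : 0 ≤ c) (hle : ∀ j ∈ s, j ≠ i → ‖f j‖ ≤ c) (hlt : c < ‖f i‖) :
    ‖∑ j ∈ s, f j‖ = ‖f i‖ := by
  rw [← s.tsum_subtype f]
  exact norm_tsum_eq_of_forall_ne_le_of_lt (f := fun j : s => f j) (i := ⟨i, hi⟩) .of_finite hc
    (fun j hj => hle j j.2 (Subtype.coe_ne_coe.mpr hj)) hlt

end IsUltrametricDist

namespace Ring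

variable {R : Type*}

lemma succ_nsmul_choose_succ [NonAssocRing R] [Pow R ℕ] [BinomialRing R] [NatPowAssoc R]
    (r : R) (k : ℕ) : (k + 1) • choose r (k + 1) = r * choose (r - 1) k := by
  simpa [choose_one_right] using choose_smul_choose r (Nat.le_add_left 1 k)

lemma choose_sub_choose_eq_sum [CommRing R] [BinomialRing R] (x y : R) (n : ℕ) :
    choose x n - choose y n = ∑ i ∈ Ioc 0 n, choose (x - y) i * choose y (n - i) := by
  have hvan := add_choose_eq n (Commute.all (x - y) y)
  rw [sub_add_cancel] at hvan
  rw [hvan, Nat.sum_antidiagonal_eq_sum_range_succ (fun i j => choose (x - y) i * choose y j),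
    Nat.range_succ_eq_Icc_zero, ← add_sum_Ioc_eq_sum_Icc (Nat.zero_le n)]
  simp

end Ring

namespace PadicInt

open IsUltrametricDist Ring

variable {p : ℕ} [hp : Fact p.Prime]

lemma norm_mul_le_left (a b : ℤ_[p]) : ‖a * b‖ ≤ ‖a‖ := by
  rw [norm_mul]; exact mul_le_of_le_one_right (norm_nonneg _) (norm_le_one _)

lemma one_le_pow_log_mul_norm_natCast {n : ℕ} (hn : n ≠ 0) :
    1 ≤ (p : ℝ) ^ Nat.log p n * ‖(n : ℤ_[p])‖ := by
  have hp1 : (1 : ℝ) < p := mod_cast hp.out.one_lt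
  rw [norm_def, coe_natCast, Padic.norm_eq_zpow_neg_valuation (mod_cast hn),
    Padic.valuation_natCast, ← zpow_natCast, ← zpow_add₀ (by positivity)]
  have hval := padicValNat_le_nat_log (p := p) n
  exact one_le_zpow₀ hp1.le (by omega)

lemma norm_choose_le_s18 (x : ℤ_[p]) {n : ℕ} (hn : n ≠ 0) :
    ‖choose x n‖ ≤ (p : ℝ) ^ Nat.log p n * ‖x‖ := by
  obtain ⟨m, rfl⟩ := Nat.exists_eq_succ_of_ne_zero hn
  have hrec := congrArg norm (succ_nsmul_choose_succ x m)
  rw [nsmul_eq_mul, norm_mul, norm_mul] at hrec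
  calc ‖choose x (m + 1)‖
      ≤ (p : ℝ) ^ Nat.log p (m + 1) * ‖((m + 1 : ℕ) : ℤ_[p])‖ * ‖choose x (m + 1)‖ :=
        le_mul_of_one_le_left (norm_nonneg _) (one_le_pow_log_mul_norm_natCast hn)
    _ = (p : ℝ) ^ Nat.log p (m + 1) * (‖x‖ * ‖choose (x - 1) m‖) := by
        rw [mul_assoc, ← hrec]
    _ ≤ (p : ℝ) ^ Nat.log p (m + 1) * ‖x‖ := by
        gcongr; simpa using norm_mul_le_left x (choose (x - 1) m)

lemma norm_choose_sub_choose_le (x y : ℤ_[p]) (n : ℕ) :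
    ‖choose x n - choose y n‖ ≤ (p : ℝ) ^ Nat.log p n * ‖x - y‖ := by
  rw [choose_sub_choose_eq_sum]
  refine norm_sum_le_of_forall_le_of_nonneg (by positivity) fun i hi => ?_
  obtain ⟨hi0, hin⟩ := mem_Ioc.mp hi
  calc ‖choose (x - y) i * choose y (n - i)‖ ≤ ‖choose (x - y) i‖ := norm_mul_le_left _ _
    _ ≤ (p : ℝ) ^ Nat.log p i * ‖x - y‖ := norm_choose_le_s18 _ hi0.ne'
    _ ≤ (p : ℝ) ^ Nat.log p n * ‖x - y‖ := by
        gcongr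
        exact_mod_cast hp.out.one_le

lemma norm_mul_choose_sub_mul_choose_le (a x y : ℤ_[p]) (n : ℕ) :
    ‖a * choose x n - a * choose y n‖ ≤ (p : ℝ) ^ Nat.log p n * ‖a‖ * ‖x - y‖ := by
  rw [← mul_sub, norm_mul, mul_comm _ ‖a‖, mul_assoc]
  exact mul_le_mul_of_nonneg_left (norm_choose_sub_choose_le x y n) (norm_nonneg a)

lemma norm_choose_neg_one (n : ℕ) : ‖choose (-1 : ℤ_[p]) n‖ = 1 := by
  rw [choose_neg, add_sub_cancel_left, choose_natCast, Nat.choose_self, Nat.cast_one]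
  rcases Int.units_eq_one_or (Int.negOnePow n) with h | h <;> simp [h]

lemma norm_choose_sub_one_eq_one {h : ℤ_[p]} {k m : ℕ} (hh : ‖h‖ ≤ (p : ℝ) ^ (-(k : ℤ)))
    (hm : m < p ^ k) : ‖choose (h - 1) m‖ = 1 := by
  obtain rfl | hm0 := eq_or_ne m 0
  · simp
  have hlog : Nat.log p m < k := Nat.log_lt_of_lt_pow hm0 hm
  have hclose : ‖choose (h - 1) m - choose (-1) m‖ < ‖choose (-1 : ℤ_[p]) m‖ := by
    rw [norm_choose_neg_one]
    refine (norm_choose_sub_choose_le _ _ m).trans_lt ?_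
    calc (p : ℝ) ^ Nat.log p m * ‖h - 1 - -1‖ ≤ (p : ℝ) ^ Nat.log p m * (p : ℝ) ^ (-(k : ℤ)) := by
          rw [sub_neg_eq_add, sub_add_cancel]; gcongr
      _ < 1 := by
          rw [← zpow_natCast, ← zpow_add₀ (mod_cast hp.out.ne_zero)]
          exact zpow_lt_one_of_neg₀ (mod_cast hp.out.one_lt) (by omega)
  rw [← sub_add_cancel (choose (h - 1) m) (choose (-1) m), add_comm,
    norm_add_eq_left_of_norm_lt hclose, norm_choose_neg_one]

lemma norm_choose_prime_pow {h : ℤ_[p]} {k : ℕ} (hh : ‖h‖ ≤ (p : ℝ) ^ (-(k : ℤ))) :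
    ‖choose h (p ^ k)‖ = (p : ℝ) ^ k * ‖h‖ := by
  obtain ⟨m, hm⟩ : ∃ m, p ^ k = m + 1 := Nat.exists_eq_succ_of_ne_zero (pow_pos hp.out.pos k).ne'
  have hrec := congrArg norm (succ_nsmul_choose_succ h m)
  rw [nsmul_eq_mul, norm_mul, norm_mul, norm_choose_sub_one_eq_one hh (by omega), mul_one, ← hm,
    Nat.cast_pow, norm_p_pow, zpow_neg, zpow_natCast] at hrec
  rw [← hrec, mul_inv_cancel_left₀ (pow_ne_zero k (mod_cast hp.out.ne_zero))]

lemma norm_choose_prime_pow_sub_choose {x y : ℤ_[p]} {k : ℕ}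
    (hxy : ‖x - y‖ ≤ (p : ℝ) ^ (-(k : ℤ))) :
    ‖choose x (p ^ k) - choose y (p ^ k)‖ = (p : ℝ) ^ k * ‖x - y‖ := by
  have hp1 : (1 : ℝ) < p := mod_cast hp.out.one_lt
  obtain rfl | hne := eq_or_ne x y
  · simp
  have hlead : ‖choose (x - y) (p ^ k) * choose y (p ^ k - p ^ k)‖ = (p : ℝ) ^ k * ‖x - y‖ := by
    rw [Nat.sub_self, choose_zero_right, mul_one, norm_choose_prime_pow hxy]
  rw [choose_sub_choose_eq_sum, norm_sum_eq_of_forall_ne_le_of_lt (i := p ^ k)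
    (c := (p : ℝ) ^ k * ‖x - y‖ / p) (mem_Ioc.mpr ⟨pow_pos hp.out.pos k, le_rfl⟩) (by positivity)
    ?_ ?_, hlead]
  · intro j hj hjk
    obtain ⟨hj0, hjk'⟩ := mem_Ioc.mp hj
    have hlog : Nat.log p j + 1 ≤ k := Nat.log_lt_of_lt_pow hj0.ne' (lt_of_le_of_ne hjk' hjk)
    calc ‖choose (x - y) j * choose y (p ^ k - j)‖ ≤ ‖choose (x - y) j‖ := norm_mul_le_left _ _
      _ ≤ (p : ℝ) ^ Nat.log p j * ‖x - y‖ := norm_choose_le_s18 _ hj0.ne'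
      _ ≤ (p : ℝ) ^ k * ‖x - y‖ / p := by
          rw [le_div_iff₀ (by positivity), mul_right_comm, ← pow_succ]
          gcongr
          exact hp1.le
  · rw [hlead]
    have hp0 : (0 : ℝ) < p := mod_cast hp.out.pos
    exact div_lt_self (mul_pos (pow_pos hp0 k) (norm_pos_iff.mpr (sub_ne_zero.mpr hne))) hp1

lemma pow_mul_norm_le_div_of_lt {a : ℤ_[p]} {m k : ℕ} (h : (p : ℝ) ^ m * ‖a‖ < (p : ℝ) ^ k) :
    (p : ℝ) ^ m * ‖a‖ ≤ (p : ℝ) ^ k / p := by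
  have hp1 : (1 : ℝ) < p := mod_cast hp.out.one_lt
  obtain rfl | ha := eq_or_ne a 0
  · rw [norm_zero, mul_zero]; positivity
  have hp0 : (p : ℝ) ≠ 0 := mod_cast hp.out.ne_zero
  rw [norm_eq_zpow_neg_valuation ha, ← zpow_natCast, ← zpow_natCast, ← zpow_add₀ hp0] at h ⊢
  rw [div_eq_mul_inv, ← zpow_sub_one₀ hp0]
  have := (zpow_lt_zpow_iff_right₀ hp1).mp h
  exact zpow_le_zpow_right₀ hp1.le (by omega)

lemma summable_mul_choose {A : ℕ → ℤ_[p]}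
    (hA : Filter.Tendsto (fun n => ‖A n‖) Filter.atTop (nhds 0)) (x : ℤ_[p]) : Summable fun n => A n * choose x n := by
  refine NonarchimedeanAddGroup.summable_of_tendsto_cofinite_zero ?_
  rw [Nat.cofinite_eq_atTop, tendsto_zero_iff_norm_tendsto_zero]
  exact squeeze_zero (fun n => norm_nonneg _) (fun n => norm_mul_le_left _ _) hA

end PadicInt

open PadicInt IsUltrametricDist

theorem mahlerBernoulliClass_locallyScaling_general {p : ℕ} [hp : Fact p.Prime]
    (A : ℕ → ℤ_[p]) (hA : Filter.Tendsto (fun n => ‖A n‖) Filter.atTop (nhds 0))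
    (T : ℤ_[p] → ℤ_[p]) (hT : ∀ x : ℤ_[p], T x = ∑' n : ℕ, A n * Ring.choose x n)
    (k n₀ : ℕ) (hn₀ : n₀ = p ^ k) (hAn₀ : ‖A n₀‖ = 1)
    (hmax : ∀ n : ℕ, n ≠ n₀ →
      (p : ℝ) ^ (Nat.log p n) * ‖A n‖ < (p : ℝ) ^ (Nat.log p n₀) * ‖A n₀‖) :
    ∀ x y : ℤ_[p], ‖x - y‖ ≤ (p : ℝ) ^ (-(k : ℤ)) →
      ‖T x - T y‖ = (p : ℝ) ^ (k : ℕ) * ‖x - y‖ := by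
  intro x y hxy
  subst hn₀
  obtain rfl | hne := eq_or_ne x y
  · simp
  have hx := summable_mul_choose hA x
  have hy := summable_mul_choose hA y
  have hlead : ‖A (p ^ k) * Ring.choose x (p ^ k) - A (p ^ k) * Ring.choose y (p ^ k)‖ =
      (p : ℝ) ^ k * ‖x - y‖ := by
    rw [← mul_sub, norm_mul, hAn₀, one_mul, norm_choose_prime_pow_sub_choose hxy]
  rw [hT, hT, ← hx.tsum_sub hy, norm_tsum_eq_of_forall_ne_le_of_lt (i := p ^ k)
    (c := (p : ℝ) ^ k * ‖x - y‖ / p) (hx.sub hy) (by positivity) ?_ ?_, hlead]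
  · intro n hn
    have hgap : (p : ℝ) ^ Nat.log p n * ‖A n‖ ≤ (p : ℝ) ^ k / p :=
      pow_mul_norm_le_div_of_lt (by simpa [hAn₀, Nat.log_pow hp.out.one_lt] using hmax n hn)
    calc _ ≤ (p : ℝ) ^ Nat.log p n * ‖A n‖ * ‖x - y‖ := norm_mul_choose_sub_mul_choose_le _ _ _ n
      _ ≤ (p : ℝ) ^ k / p * ‖x - y‖ := by gcongr
      _ = (p : ℝ) ^ k * ‖x - y‖ / p := by ring
  · rw [hlead]
    have hp0 : (0 : ℝ) < p := mod_cast hp.out.pos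
    exact div_lt_self (mul_pos (pow_pos hp0 k) (norm_pos_iff.mpr (sub_ne_zero.mpr hne)))
      (mod_cast hp.out.one_lt)

/-- a map in the Mahler–Bernoulli class, i.e. given by a uniformly
convergent Mahler series `T(x) = Σ Aₙ binom(x,n)` where `p^{⌊log_p n⌋}|Aₙ|` attains its
maximum at a unique `n₀ = p^k` with `k > 0` and `|A_{n₀}| = 1`, is `(p^{-k}, p^k)`
locally scaling. -/
theorem mahlerBernoulliClass_locallyScaling {p : ℕ} [hp : Fact p.Prime]
    (A : ℕ → ℤ_[p]) (hA : Filter.Tendsto (fun n => ‖A n‖) Filter.atTop (nhds 0))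
    (T : ℤ_[p] → ℤ_[p]) (hT : ∀ x : ℤ_[p], T x = ∑' n : ℕ, A n * Ring.choose x n)
    (k n₀ : ℕ) (hk : 0 < k) (hn₀ : n₀ = p ^ k) (hAn₀ : ‖A n₀‖ = 1)
    (hmax : ∀ n : ℕ, n ≠ n₀ →
      (p : ℝ) ^ (Nat.log p n) * ‖A n‖ < (p : ℝ) ^ (Nat.log p n₀) * ‖A n₀‖) :
    ∀ x y : ℤ_[p], ‖x - y‖ ≤ (p : ℝ) ^ (-(k : ℤ)) →
      ‖T x - T y‖ = (p : ℝ) ^ (k : ℕ) * ‖x - y‖ :=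
  mahlerBernoulliClass_locallyScaling_general (hp := hp) A hA T hT k n₀ hn₀ hAn₀ hmax
end

section
/- Let a ∈ Q_p with |a| = p^k for some k > 0, and define f_a: Z_p → Z_p by f_a(x) = g(ax), where g: Q_p → Z_p truncates the negative-power part of the p-adic expansion. Then f_a is (p^{-k}, p^k) locally scaling: |f_a(x) - f_a(y)| = p^k|x-y| whenever |x-y| ≤ p^{-k}. -/
/-!
`z - g(z)` is a rational `m / p^j ∈ [0, 1)`. If `‖z - w‖ ≤ 1`, the difference of two such
rationals is a `p`-adic integer with denominator a power of `p` lying in `(-1, 1)`, hence `0`.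
So `g(z) - g(w) = z - w`, and `|g(ax) - g(ay)| = |a| |x - y|` once `|a (x - y)| ≤ 1`.
-/

namespace Padic

variable {p : ℕ} [Fact p.Prime]

theorem intCast_eq_zero_of_norm_div_pow_le_one {N : ℤ} {n : ℕ} (hN : |N| < (p : ℤ) ^ n)
    (h : ‖(N : ℚ_[p]) / (p : ℚ_[p]) ^ n‖ ≤ 1) : N = 0 := by
  have hp : (0 : ℝ) < p := by exact_mod_cast (Fact.out : p.Prime).pos
  have hnorm : ‖(N : ℚ_[p])‖ ≤ (p : ℝ) ^ (-n : ℤ) := by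
    rw [norm_div, norm_pow, norm_p, inv_pow, div_inv_eq_mul] at h
    rwa [zpow_neg, zpow_natCast, ← one_div, le_div_iff₀ (by positivity)]
  exact Int.eq_zero_of_abs_lt_dvd ((norm_int_le_pow_iff_dvd N n).mp hnorm) hN

theorem div_pow_eq_of_norm_sub_le_one {m₁ m₂ j₁ j₂ : ℕ} (h₁ : m₁ < p ^ j₁) (h₂ : m₂ < p ^ j₂)
    (h : ‖(m₁ : ℚ_[p]) / (p : ℚ_[p]) ^ j₁ - (m₂ : ℚ_[p]) / (p : ℚ_[p]) ^ j₂‖ ≤ 1) :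
    (m₁ : ℚ_[p]) / (p : ℚ_[p]) ^ j₁ = (m₂ : ℚ_[p]) / (p : ℚ_[p]) ^ j₂ := by
  have hp : (p : ℚ_[p]) ≠ 0 := Nat.cast_ne_zero.mpr (Fact.out : p.Prime).ne_zero
  set N : ℤ := m₁ * (p : ℤ) ^ j₂ - m₂ * (p : ℤ) ^ j₁
  have hsub : (m₁ : ℚ_[p]) / (p : ℚ_[p]) ^ j₁ - (m₂ : ℚ_[p]) / (p : ℚ_[p]) ^ j₂
      = (N : ℚ_[p]) / (p : ℚ_[p]) ^ (j₁ + j₂) := by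
    simp only [N]
    push_cast
    field_simp
    ring
  have hN : |N| < (p : ℤ) ^ (j₁ + j₂) := by
    have h₁' : (m₁ : ℤ) < (p : ℤ) ^ j₁ := by exact_mod_cast h₁
    have h₂' : (m₂ : ℤ) < (p : ℤ) ^ j₂ := by exact_mod_cast h₂
    have hp₀ : (0 : ℤ) < p := by exact_mod_cast (Fact.out : p.Prime).pos
    rw [abs_sub_lt_iff, pow_add]
    constructor <;> nlinarith [pow_pos hp₀ j₁, pow_pos hp₀ j₂]
  rw [hsub] at h
  rw [← sub_eq_zero, hsub, intCast_eq_zero_of_norm_div_pow_le_one hN h]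
  simp

theorem coe_sub_eq_sub_of_norm_sub_le_one {g : ℚ_[p] → ℤ_[p]}
    (hg : ∀ x : ℚ_[p], ∃ m j : ℕ, m < p ^ j ∧ x - (g x : ℚ_[p]) = (m : ℚ_[p]) / (p : ℚ_[p]) ^ j)
    {z w : ℚ_[p]} (hzw : ‖z - w‖ ≤ 1) : ((g z - g w : ℤ_[p]) : ℚ_[p]) = z - w := by
  obtain ⟨m₁, j₁, hm₁, hz⟩ := hg z
  obtain ⟨m₂, j₂, hm₂, hw⟩ := hg w
  have hfrac : (m₁ : ℚ_[p]) / (p : ℚ_[p]) ^ j₁ - (m₂ : ℚ_[p]) / (p : ℚ_[p]) ^ j₂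
      = (z - w) - ((g z - g w : ℤ_[p]) : ℚ_[p]) := by
    rw [← hz, ← hw, PadicInt.coe_sub]
    ring
  have hfrac_norm : ‖(m₁ : ℚ_[p]) / (p : ℚ_[p]) ^ j₁ - (m₂ : ℚ_[p]) / (p : ℚ_[p]) ^ j₂‖ ≤ 1 := by
    rw [hfrac, sub_eq_add_neg]
    refine (nonarchimedean _ _).trans (max_le hzw ?_)
    rw [norm_neg, PadicInt.padic_norm_e_of_padicInt]
    exact PadicInt.norm_le_one _
  rw [div_pow_eq_of_norm_sub_le_one hm₁ hm₂ hfrac_norm, sub_self] at hfrac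
  linear_combination hfrac

end Padic

theorem fa_locallyScaling_general {p : ℕ} [hp : Fact p.Prime]
    (a : ℚ_[p]) (k : ℕ) (ha : ‖a‖ = (p : ℝ) ^ (k : ℕ))
    (g : ℚ_[p] → ℤ_[p])
    (hg : ∀ x : ℚ_[p], ∃ m j : ℕ, m < p ^ j ∧ x - (g x : ℚ_[p]) = (m : ℚ_[p]) / (p : ℚ_[p]) ^ j) :
    ∀ x y : ℤ_[p], ‖x - y‖ ≤ (p : ℝ) ^ (-(k : ℤ)) →
      ‖g (a * (x : ℚ_[p])) - g (a * (y : ℚ_[p]))‖ = (p : ℝ) ^ (k : ℕ) * ‖x - y‖ := by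
  intro x y hxy
  have hnorm : ‖a * ((x - y : ℤ_[p]) : ℚ_[p])‖ = (p : ℝ) ^ k * ‖x - y‖ := by
    rw [norm_mul, ha, PadicInt.padic_norm_e_of_padicInt]
  have hle : ‖a * (x : ℚ_[p]) - a * (y : ℚ_[p])‖ ≤ 1 := by
    rw [← mul_sub, ← PadicInt.coe_sub, hnorm]
    calc (p : ℝ) ^ k * ‖x - y‖ ≤ (p : ℝ) ^ k * (p : ℝ) ^ (-(k : ℤ)) := by gcongr
      _ = 1 := by simp
  rw [← PadicInt.padic_norm_e_of_padicInt, Padic.coe_sub_eq_sub_of_norm_sub_le_one hg hle,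
    ← mul_sub, ← PadicInt.coe_sub, hnorm]

/-- for `a ∈ ℚ_p` with `|a| = p^k`, `k > 0`, the map `f_a(x) = g(ax)`
(where `g` truncates the negative-power part of the `p`-adic expansion, i.e.
`x - g(x) = m/p^j` with `0 ≤ m < p^j`) is `(p^{-k}, p^k)` locally scaling. -/
theorem fa_locallyScaling {p : ℕ} [hp : Fact p.Prime]
    (a : ℚ_[p]) (k : ℕ) (hk : 0 < k) (ha : ‖a‖ = (p : ℝ) ^ (k : ℕ))
    (g : ℚ_[p] → ℤ_[p])
    (hg : ∀ x : ℚ_[p], ∃ m j : ℕ, m < p ^ j ∧ x - (g x : ℚ_[p]) = (m : ℚ_[p]) / (p : ℚ_[p]) ^ j) :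
    ∀ x y : ℤ_[p], ‖x - y‖ ≤ (p : ℝ) ^ (-(k : ℤ)) →
      ‖g (a * (x : ℚ_[p])) - g (a * (y : ℚ_[p]))‖ = (p : ℝ) ^ (k : ℕ) * ‖x - y‖ :=
  fa_locallyScaling_general (hp := hp) a k ha g hg
end
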